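/- If t : ℝⁿ → ℝⁿ is a measurable map satisfying |t(x) − t(y)| ≥ c|x − y| for almost every x, y ∈ ℝⁿ (some c > 0), then for every p ∈ [1, ∞] the composition map u ↦ u ∘ t is bounded on L^p(ℝⁿ), with operator norm depending only on n, c, and p. -/

import Mathlib

/-!
Up to a null set, `t` pulls a closed ball of radius `r` back into a closed ball of radius
`2r/c` around any good point of the preimage, so the pushforward of Lebesgue measure under `t`
gives every ball at most `(2/c)^n` times its Lebesgue measure. By the Besicovitch covering
theorem this comparison on balls gives `volume.map t ≤ (2/c)^n • volume`, and changing
variables in the `L^p` norm then yields the bound with constant `(2/c)^(n/p)`.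
-/

open MeasureTheory Metric Module
open scoped ENNReal NNReal Topology

theorem preimage_closedBall_ae_le_closedBall {α β : Type*} [PseudoMetricSpace α]
    [PseudoMetricSpace β] [MeasurableSpace α] {μ : Measure α} {t : α → β} {c : ℝ}
    (hc : 0 < c) {a : α} (ha : ∀ᵐ b ∂μ, c * dist a b ≤ dist (t a) (t b)) {x : β} {r : ℝ}
    (hax : t a ∈ closedBall x r) :
    t ⁻¹' closedBall x r ≤ᵐ[μ] closedBall a (2 / c * r) := by
  filter_upwards [ha] with b hab hbx
  have hdist : dist (t a) (t b) ≤ 2 * r := by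
    linarith [dist_triangle_right (t a) (t b) x, mem_closedBall.1 hax, mem_closedBall.1 hbx]
  show dist b a ≤ _
  rw [dist_comm, div_mul_eq_mul_div, le_div_iff₀ hc, mul_comm]
  exact hab.trans hdist

theorem MeasureTheory.Measure.le_of_forall_measure_closedBall_le {α : Type*} [MetricSpace α]
    [MeasurableSpace α] [BorelSpace α] [SecondCountableTopology α] [HasBesicovitchCovering α]
    {ν μ : Measure α} [SFinite ν] [IsLocallyFiniteMeasure μ]
    (h : ∀ x, ∀ r > 0, ν (closedBall x r) ≤ μ (closedBall x r)) : ν ≤ μ := by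
  refine Measure.le_intro fun s _ _ ↦ (Besicovitch.vitaliFamily ν).measure_le_of_frequently_le μ
    Measure.AbsolutelyContinuous.rfl s fun x _ ↦ ?_
  have hsmall : ∀ᶠ r in 𝓝[>] (0 : ℝ), ν (closedBall x r) ≤ μ (closedBall x r) :=
    eventually_nhdsWithin_of_forall fun r hr ↦ h x r hr
  exact (Besicovitch.tendsto_filterAt ν x).frequently hsmall.frequently

section AddHaar

variable {E : Type*} [NormedAddCommGroup E] [NormedSpace ℝ E] [FiniteDimensional ℝ E]
  [MeasurableSpace E] [BorelSpace E] (μ : Measure E) [μ.IsAddHaarMeasure] {t : E → E} {c : ℝ}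

theorem measure_preimage_closedBall_le (hc : 0 < c)
    (hexp : ∀ᵐ a ∂μ, ∀ᵐ b ∂μ, c * dist a b ≤ dist (t a) (t b)) (x : E) (r : ℝ) :
    μ (t ⁻¹' closedBall x r) ≤
      ENNReal.ofReal ((2 / c) ^ finrank ℝ E) * μ (closedBall x r) := by
  by_cases h0 : μ (t ⁻¹' closedBall x r) = 0
  · simp [h0]
  obtain ⟨a, hax, ha⟩ := Measure.exists_mem_of_measure_ne_zero_of_ae h0 (ae_restrict_of_ae hexp)
  calc μ (t ⁻¹' closedBall x r) ≤ μ (closedBall a (2 / c * r)) :=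
        measure_mono_ae (preimage_closedBall_ae_le_closedBall hc ha hax)
    _ = ENNReal.ofReal ((2 / c) ^ finrank ℝ E) * μ (closedBall x r) := by
        rw [Measure.addHaar_closedBall_mul_of_pos μ a (by positivity : 0 < 2 / c),
          Measure.addHaar_closedBall_center μ x]

theorem map_le_smul_of_ae_expanding (hc : 0 < c) (ht : Measurable t)
    (hexp : ∀ᵐ a ∂μ, ∀ᵐ b ∂μ, c * dist a b ≤ dist (t a) (t b)) :
    μ.map t ≤ ((2 / c) ^ finrank ℝ E).toNNReal • μ :=
  Measure.le_of_forall_measure_closedBall_le fun x r _ ↦ by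
    rw [Measure.map_apply ht measurableSet_closedBall, Measure.smul_apply, ENNReal.smul_def]
    exact measure_preimage_closedBall_le μ hc hexp x r

end AddHaar

theorem eLpNorm_comp_le_of_map_le_smul {α β ε : Type*} [MeasurableSpace α] [MeasurableSpace β]
    [TopologicalSpace ε] [ContinuousENorm ε] {μ : Measure α} {ν : Measure β} {t : α → β}
    (ht : AEMeasurable t μ) {K : ℝ≥0∞} (hK : μ.map t ≤ K • ν) {u : β → ε}
    (hu : AEStronglyMeasurable u ν) (p : ℝ≥0∞) :
    eLpNorm (u ∘ t) p μ ≤ K ^ (1 / p).toReal * eLpNorm u p ν := by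
  rw [← eLpNorm_map_measure (hu.mono_ac (Measure.absolutelyContinuous_of_le_smul hK)) ht]
  exact eLpNorm_le_of_measure_le_smul hK

/-- If `t : ℝⁿ → ℝⁿ` is measurable and satisfies `|t x − t y| ≥ c|x − y|` for a.e.
pairs `x, y`, then for every `p ∈ [1, ∞]` the composition `u ↦ u ∘ t` is bounded on
`L^p(ℝⁿ)` (with operator norm depending only on `n`, `c`, `p`). -/
theorem composition_bounded_on_Lp (n : ℕ) (c : ℝ) (hc : 0 < c)
    (t : EuclideanSpace ℝ (Fin n) → EuclideanSpace ℝ (Fin n))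
    (ht : Measurable t)
    (hexp : ∀ᵐ p ∂((volume : Measure (EuclideanSpace ℝ (Fin n))).prod volume),
      c * ‖p.1 - p.2‖ ≤ ‖t p.1 - t p.2‖) :
    ∀ p : ℝ≥0∞, 1 ≤ p → ∃ C : ℝ≥0∞, C ≠ ⊤ ∧
      ∀ u : EuclideanSpace ℝ (Fin n) → ℝ, MemLp u p volume →
        eLpNorm (u ∘ t) p volume ≤ C * eLpNorm u p volume := by
  intro p _
  have hexp_iter : ∀ᵐ a, ∀ᵐ b, c * dist a b ≤ dist (t a) (t b) := by
    simpa only [dist_eq_norm] using Measure.ae_ae_of_ae_prod hexp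
  have hmap := map_le_smul_of_ae_expanding volume hc ht hexp_iter
  rw [finrank_euclideanSpace_fin] at hmap
  exact ⟨_, by finiteness, fun u hu ↦ eLpNorm_comp_le_of_map_le_smul ht.aemeasurable hmap hu.1 p⟩
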